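/- Let ρ be an elliptic N-function and set A(ξ) := (ρ'(|ξ|)/|ξ|) ξ for ξ ∈ ℝ^{n×n}. Then uniformly in P, Q ∈ ℝ^{n×n}: |A(P) − A(Q)| ∼ (ρ_{|P|})'(|P − Q|), where ρ_{|P|} is the N-function ρ shifted by |P|, with constants depending only on the characteristics of ρ. -/

import Mathlib

open Set Filter

/-- An N-function: strictly increasing and convex on `[0,∞)`, vanishing at `0`,
with `ρ(t)/t → 0` as `t → 0⁺` and `t/ρ(t) → 0` as `t → ∞`. -/
def IsNFunction (ρ : ℝ → ℝ) : Prop :=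
  ρ 0 = 0 ∧ StrictMonoOn ρ (Ici 0) ∧ ConvexOn ℝ (Ici 0) ρ ∧
    Tendsto (fun t => ρ t / t) (nhdsWithin 0 (Ioi 0)) (nhds 0) ∧
    Tendsto (fun t => t / ρ t) atTop (nhds 0)

/-- The conjugate (Young/Legendre) function `ρ*(t) = sup_{s ≥ 0} (s t − ρ s)`. -/
noncomputable def conjN (ρ : ℝ → ℝ) (t : ℝ) : ℝ :=
  sSup {y | ∃ s ≥ 0, y = s * t - ρ s}

/-- The shifted N-function `ρ_a(t) = ∫₀ᵗ ρ'(a+τ)/(a+τ) · τ dτ`. -/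
noncomputable def shiftN (ρ : ℝ → ℝ) (a : ℝ) (t : ℝ) : ℝ :=
  ∫ τ in (0:ℝ)..t, deriv ρ (a + τ) / (a + τ) * τ

/-- An elliptic N-function with characteristics `c₁, c₂`: `C¹` on `[0,∞)`,
`C²` on `(0,∞)`, and `ρ'(t) ∼ t ρ''(t)` uniformly in `t > 0`. -/
def IsElliptic (ρ : ℝ → ℝ) (c₁ c₂ : ℝ) : Prop :=
  ContDiffOn ℝ 1 ρ (Ici 0) ∧ ContDiffOn ℝ 2 ρ (Ioi 0) ∧
    ∀ t > 0, c₁ * deriv ρ t ≤ t * deriv (deriv ρ) t ∧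
      t * deriv (deriv ρ) t ≤ c₂ * deriv ρ t

/-- The tensor `A^ρ(ξ) = (ρ'(|ξ|)/|ξ|) ξ` on `ℝ^{n×n}` (Frobenius structure). -/
noncomputable def AtensR (n : ℕ) (ρ : ℝ → ℝ) (ξ : EuclideanSpace ℝ (Fin n × Fin n)) :
    EuclideanSpace ℝ (Fin n × Fin n) :=
  (deriv ρ ‖ξ‖ / ‖ξ‖) • ξ

/-!
Write `φ = ρ'` and `ψ(t) = φ(t)/t`. Ellipticity makes `φ(t)/t^c₁` increasing and `φ(t)/t^c₂`
decreasing, so `φ` is increasing and `ψ` changes at most by a bounded factor between comparable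
arguments. For `a = |P| ≥ b = |Q|` one shows `|A(P) − A(Q)| ∼ ψ(a)|P − Q|`. If `b ≤ a/2`, both
sides are comparable to `φ(a)`. Otherwise the identity
`|αP − βQ|² = (αa − βb)² + αβ(|P − Q|² − (a − b)²)` with `α = ψ(a)` and `β = ψ(b) ∼ ψ(a)` reduces
the claim to `φ(a) − φ(b) ∼ ψ(a)(a − b)`, which is the mean value theorem combined with
`c₁ψ ≤ φ' ≤ c₂ψ`. Finally `|P| + |P − Q|` lies between `max(|P|, |Q|)` and three times it.
-/

theorem monotoneOn_div_rpow_of_mul_le_mul_deriv {φ φ' : ℝ → ℝ} {c : ℝ}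
    (hφ : ∀ t > 0, HasDerivAt φ (φ' t) t) (h : ∀ t > 0, c * φ t ≤ t * φ' t) :
    MonotoneOn (fun t => φ t / t ^ c) (Ioi 0) := by
  have hderiv : ∀ t > 0, HasDerivAt (fun t => φ t / t ^ c)
      ((φ' t * t ^ c - φ t * (c * t ^ (c - 1))) / (t ^ c) ^ 2) t := fun t ht =>
    (hφ t ht).div (Real.hasDerivAt_rpow_const (Or.inl ht.ne')) (Real.rpow_pos_of_pos ht c).ne'
  refine monotoneOn_of_hasDerivWithinAt_nonneg (convex_Ioi 0)
    (fun t ht => (hderiv t ht).continuousAt.continuousWithinAt)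
    (fun t ht => (hderiv t (interior_subset ht)).hasDerivWithinAt) fun t ht => ?_
  rw [interior_Ioi] at ht
  have ht : 0 < t := ht
  have htc := Real.rpow_pos_of_pos ht c
  have hnum : φ' t * t ^ c - φ t * (c * t ^ (c - 1)) = t ^ c / t * (t * φ' t - c * φ t) := by
    rw [Real.rpow_sub_one ht.ne']
    field_simp
  rw [hnum]
  exact div_nonneg (mul_nonneg (div_nonneg htc.le ht.le) (sub_nonneg.mpr (h t ht))) (sq_nonneg _)

theorem antitoneOn_div_rpow_of_mul_deriv_le_mul {φ φ' : ℝ → ℝ} {c : ℝ}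
    (hφ : ∀ t > 0, HasDerivAt φ (φ' t) t) (h : ∀ t > 0, t * φ' t ≤ c * φ t) :
    AntitoneOn (fun t => φ t / t ^ c) (Ioi 0) := by
  have hneg := monotoneOn_div_rpow_of_mul_le_mul_deriv (φ := fun t => -φ t) (φ' := fun t => -φ' t)
    (fun t ht => (hφ t ht).neg) fun t ht => by linarith [h t ht]
  intro s hs t ht hst
  have := hneg hs ht hst
  simp only [neg_div] at this
  linarith

namespace IsElliptic

variable {ρ : ℝ → ℝ} {c₁ c₂ : ℝ}

theorem hasDerivAt_deriv (hE : IsElliptic ρ c₁ c₂) {t : ℝ} (ht : 0 < t) :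
    HasDerivAt (deriv ρ) (deriv (deriv ρ) t) t :=
  ((hE.2.1.deriv_of_isOpen (m := 1) isOpen_Ioi (by norm_num)).differentiableOn (by norm_num)
    |>.differentiableAt (Ioi_mem_nhds ht)).hasDerivAt

theorem monotoneOn_deriv_div_rpow (hE : IsElliptic ρ c₁ c₂) :
    MonotoneOn (fun t => deriv ρ t / t ^ c₁) (Ioi 0) :=
  monotoneOn_div_rpow_of_mul_le_mul_deriv (fun _ ht => hE.hasDerivAt_deriv ht)
    fun t ht => (hE.2.2 t ht).1

theorem antitoneOn_deriv_div_rpow (hE : IsElliptic ρ c₁ c₂) :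
    AntitoneOn (fun t => deriv ρ t / t ^ c₂) (Ioi 0) :=
  antitoneOn_div_rpow_of_mul_deriv_le_mul (fun _ ht => hE.hasDerivAt_deriv ht)
    fun t ht => (hE.2.2 t ht).2

theorem deriv_pos (hN : IsNFunction ρ) (hE : IsElliptic ρ c₁ c₂) {t : ℝ} (ht : 0 < t) :
    0 < deriv ρ t := by
  obtain ⟨s, hs, hslope⟩ := exists_deriv_eq_slope ρ ht (hE.1.continuousOn.mono Icc_subset_Ici_self)
    ((hE.2.1.differentiableOn (by norm_num)).mono Ioo_subset_Ioi_self)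
  have hρt : 0 < ρ t := hN.1 ▸ hN.2.1 self_mem_Ici ht.le ht
  have hs_pos : 0 < deriv ρ s / s ^ c₁ := by
    rw [hslope, hN.1, sub_zero, sub_zero]
    exact div_pos (div_pos hρt ht) (Real.rpow_pos_of_pos hs.1 c₁)
  have := hs_pos.trans_le (hE.monotoneOn_deriv_div_rpow hs.1 ht hs.2.le)
  exact (div_pos_iff_of_pos_right (Real.rpow_pos_of_pos ht c₁)).mp this

theorem monotoneOn_deriv (hc₁ : 0 ≤ c₁) (hE : IsElliptic ρ c₁ c₂)
    (hpos : ∀ t > 0, 0 < deriv ρ t) : MonotoneOn (deriv ρ) (Ioi 0) :=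
  monotoneOn_of_hasDerivWithinAt_nonneg (convex_Ioi 0)
    (fun _ ht => (hE.hasDerivAt_deriv ht).continuousAt.continuousWithinAt)
    (fun _ ht => (hE.hasDerivAt_deriv (interior_subset ht)).hasDerivWithinAt) fun t ht => by
      rw [interior_Ioi] at ht
      exact nonneg_of_mul_nonneg_right ((mul_nonneg hc₁ (hpos t ht).le).trans (hE.2.2 t ht).1) ht

theorem deriv_le_rpow_mul (hE : IsElliptic ρ c₁ c₂) {s t : ℝ} (hs : 0 < s) (hst : s ≤ t) :
    deriv ρ t ≤ (t / s) ^ c₂ * deriv ρ s := by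
  have ht := hs.trans_le hst
  have := hE.antitoneOn_deriv_div_rpow hs ht hst
  rw [div_le_div_iff₀ (Real.rpow_pos_of_pos ht c₂) (Real.rpow_pos_of_pos hs c₂)] at this
  rw [Real.div_rpow ht.le hs.le, div_mul_eq_mul_div, le_div_iff₀ (Real.rpow_pos_of_pos hs c₂)]
  linarith

theorem deriv_div_le_rpow_mul (hc₂ : 0 ≤ c₂) (hE : IsElliptic ρ c₁ c₂)
    (hpos : ∀ t > 0, 0 < deriv ρ t) {r s t : ℝ} (hs : 0 < s) (hst : s ≤ t) (hts : t ≤ r * s) :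
    deriv ρ t / t ≤ r ^ c₂ * (deriv ρ s / s) := by
  have hts' : t / s ≤ r := (div_le_iff₀ hs).mpr hts
  have hgrowth : deriv ρ t ≤ r ^ c₂ * deriv ρ s :=
    (hE.deriv_le_rpow_mul hs hst).trans <| mul_le_mul_of_nonneg_right
      (Real.rpow_le_rpow (div_nonneg (hs.le.trans hst) hs.le) hts' hc₂) (hpos s hs).le
  have hr : 0 ≤ r := (div_nonneg (hs.le.trans hst) hs.le).trans hts'
  rw [mul_div_assoc']
  exact div_le_div₀ (mul_nonneg (Real.rpow_nonneg hr _) (hpos s hs).le) hgrowth hs hst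

theorem deriv_div_le_mul (hc₁ : 0 ≤ c₁) (hE : IsElliptic ρ c₁ c₂)
    (hpos : ∀ t > 0, 0 < deriv ρ t) {r s t : ℝ} (hs : 0 < s) (hst : s ≤ t) (hts : t ≤ r * s) :
    deriv ρ s / s ≤ r * (deriv ρ t / t) := by
  have ht := hs.trans_le hst
  have hmono : deriv ρ s ≤ deriv ρ t := hE.monotoneOn_deriv hc₁ hpos hs ht hst
  rw [div_le_iff₀ hs, mul_div_assoc', div_mul_eq_mul_div, le_div_iff₀ ht]
  nlinarith [hpos t ht]

theorem deriv_sub_deriv_bounds (hc₁ : 0 ≤ c₁) (hc₂ : 0 ≤ c₂) (hE : IsElliptic ρ c₁ c₂)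
    (hpos : ∀ t > 0, 0 < deriv ρ t) {a b : ℝ} (hb : 0 < b) (hba : b ≤ a) (hab : a ≤ 2 * b) :
    c₁ / 2 ^ c₂ * (deriv ρ a / a) * (a - b) ≤ deriv ρ a - deriv ρ b ∧
      deriv ρ a - deriv ρ b ≤ 2 * c₂ * (deriv ρ a / a) * (a - b) := by
  rcases hba.eq_or_lt with rfl | hba
  · simp
  obtain ⟨ξ, ⟨hbξ, hξa⟩, hslope⟩ := exists_hasDerivAt_eq_slope (deriv ρ) (deriv (deriv ρ)) hba
    (fun x hx => (hE.hasDerivAt_deriv (hb.trans_le hx.1)).continuousAt.continuousWithinAt)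
    fun x hx => hE.hasDerivAt_deriv (hb.trans hx.1)
  have hξ : 0 < ξ := hb.trans hbξ
  have hincr : deriv ρ a - deriv ρ b = deriv (deriv ρ) ξ * (a - b) := by
    rw [hslope, div_mul_cancel₀ _ (sub_pos.mpr hba).ne']
  obtain ⟨hlow, hup⟩ := hE.2.2 ξ hξ
  have hξa2 : a ≤ 2 * ξ := by linarith
  have hψlow : deriv ρ a / a ≤ 2 ^ c₂ * (deriv ρ ξ / ξ) :=
    hE.deriv_div_le_rpow_mul hc₂ hpos hξ hξa.le hξa2
  have hψup : deriv ρ ξ / ξ ≤ 2 * (deriv ρ a / a) :=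
    hE.deriv_div_le_mul hc₁ hpos hξ hξa.le hξa2
  have hderiv_low : c₁ * (deriv ρ ξ / ξ) ≤ deriv (deriv ρ) ξ := by
    rw [mul_div_assoc', div_le_iff₀ hξ]; linarith
  have hderiv_up : deriv (deriv ρ) ξ ≤ c₂ * (deriv ρ ξ / ξ) := by
    rw [mul_div_assoc', le_div_iff₀ hξ]; linarith
  rw [hincr]
  constructor
  · refine mul_le_mul_of_nonneg_right (le_trans ?_ hderiv_low) (sub_nonneg.mpr hba.le)
    calc c₁ / 2 ^ c₂ * (deriv ρ a / a) ≤ c₁ / 2 ^ c₂ * (2 ^ c₂ * (deriv ρ ξ / ξ)) := by gcongr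
      _ = c₁ * (deriv ρ ξ / ξ) := by field_simp
  · refine mul_le_mul_of_nonneg_right (hderiv_up.trans ?_) (sub_nonneg.mpr hba.le)
    calc c₂ * (deriv ρ ξ / ξ) ≤ c₂ * (2 * (deriv ρ a / a)) := by gcongr
      _ = 2 * c₂ * (deriv ρ a / a) := by ring

end IsElliptic

section InnerProductSpace

variable {E : Type*} [NormedAddCommGroup E] [InnerProductSpace ℝ E]

theorem sq_norm_sub_norm_le {F : Type*} [SeminormedAddCommGroup F] (x y : F) :
    (‖x‖ - ‖y‖) ^ 2 ≤ ‖x - y‖ ^ 2 :=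
  sq_le_sq.mpr ((abs_norm_sub_norm_le x y).trans (le_abs_self _))

theorem norm_smul_sub_smul_sq (α β : ℝ) (x y : E) :
    ‖α • x - β • y‖ ^ 2 =
      (α * ‖x‖ - β * ‖y‖) ^ 2 + α * β * (‖x - y‖ ^ 2 - (‖x‖ - ‖y‖) ^ 2) := by
  rw [norm_sub_sq_real, norm_sub_sq_real, norm_smul, norm_smul, real_inner_smul_left,
    real_inner_smul_right, Real.norm_eq_abs, Real.norm_eq_abs, mul_pow, mul_pow, sq_abs, sq_abs]
  ring

theorem mul_norm_sub_le_norm_smul_sub_smul {α β γ : ℝ} {x y : E} (hγ : 0 ≤ γ)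
    (h₁ : γ * |‖x‖ - ‖y‖| ≤ |α * ‖x‖ - β * ‖y‖|) (h₂ : γ ^ 2 ≤ α * β) :
    γ * ‖x - y‖ ≤ ‖α • x - β • y‖ := by
  have h₁' := pow_le_pow_left₀ (by positivity) h₁ 2
  rw [mul_pow, sq_abs, sq_abs] at h₁'
  refine le_of_sq_le_sq ?_ (norm_nonneg _)
  rw [norm_smul_sub_smul_sq, mul_pow]
  nlinarith [mul_le_mul_of_nonneg_right h₂ (sub_nonneg.mpr (sq_norm_sub_norm_le x y))]

theorem norm_smul_sub_smul_le_mul_norm_sub {α β γ : ℝ} {x y : E} (hγ : 0 ≤ γ)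
    (h₁ : |α * ‖x‖ - β * ‖y‖| ≤ γ * |‖x‖ - ‖y‖|) (h₂ : α * β ≤ γ ^ 2) :
    ‖α • x - β • y‖ ≤ γ * ‖x - y‖ := by
  have h₁' := pow_le_pow_left₀ (abs_nonneg _) h₁ 2
  rw [mul_pow, sq_abs, sq_abs] at h₁'
  refine le_of_sq_le_sq ?_ (by positivity)
  rw [norm_smul_sub_smul_sq, mul_pow]
  nlinarith [mul_le_mul_of_nonneg_right h₂ (sub_nonneg.mpr (sq_norm_sub_norm_le x y))]

noncomputable def radialMap (φ : ℝ → ℝ) (x : E) : E :=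
  (φ ‖x‖ / ‖x‖) • x

theorem norm_radialMap {φ : ℝ → ℝ} {x : E} (hx : x ≠ 0) (hφ : 0 ≤ φ ‖x‖) :
    ‖radialMap φ x‖ = φ ‖x‖ := by
  have hx' : 0 < ‖x‖ := norm_pos_iff.mpr hx
  rw [radialMap, norm_smul, Real.norm_eq_abs, abs_of_nonneg (div_nonneg hφ hx'.le),
    div_mul_cancel₀ _ hx'.ne']

namespace IsElliptic

variable {ρ : ℝ → ℝ} {c₁ c₂ : ℝ}

theorem norm_radialMap_sub_near (hc₁ : 0 ≤ c₁) (hc₂ : 0 ≤ c₂) (hE : IsElliptic ρ c₁ c₂)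
    (hpos : ∀ t > 0, 0 < deriv ρ t) {x y : E} (hy : 0 < ‖y‖) (hyx : ‖y‖ ≤ ‖x‖)
    (hxy : ‖x‖ ≤ 2 * ‖y‖) :
    min c₁ 1 / 2 ^ c₂ * (deriv ρ ‖x‖ / ‖x‖) * ‖x - y‖ ≤
        ‖radialMap (deriv ρ) x - radialMap (deriv ρ) y‖ ∧
      ‖radialMap (deriv ρ) x - radialMap (deriv ρ) y‖ ≤
        max (2 * c₂) 4 * (deriv ρ ‖x‖ / ‖x‖) * ‖x - y‖ := by
  have hx : 0 < ‖x‖ := hy.trans_le hyx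
  set a := ‖x‖
  set b := ‖y‖
  set α := deriv ρ a / a
  set β := deriv ρ b / b
  have hα : 0 ≤ α := div_nonneg (hpos a hx).le hx.le
  have hαa : α * a = deriv ρ a := div_mul_cancel₀ _ hx.ne'
  have hβb : β * b = deriv ρ b := div_mul_cancel₀ _ hy.ne'
  have hab : 0 ≤ a - b := sub_nonneg.mpr hyx
  have hincr : 0 ≤ deriv ρ a - deriv ρ b := sub_nonneg.mpr (hE.monotoneOn_deriv hc₁ hpos hy hx hyx)
  obtain ⟨hincr_low, hincr_up⟩ := hE.deriv_sub_deriv_bounds hc₁ hc₂ hpos hy hyx hxy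
  have hαβ : α ≤ 2 ^ c₂ * β := hE.deriv_div_le_rpow_mul hc₂ hpos hy hyx hxy
  have hβα : β ≤ 2 * α := hE.deriv_div_le_mul hc₁ hpos hy hyx hxy
  have hD : 1 ≤ (2 : ℝ) ^ c₂ := Real.one_le_rpow (by norm_num) hc₂
  set k := min c₁ 1 / 2 ^ c₂
  set K := max (2 * c₂) 4
  have hk : k ≤ c₁ / 2 ^ c₂ := div_le_div_of_nonneg_right (min_le_left _ _) (by positivity)
  have hk_sq : k ^ 2 ≤ 1 / 2 ^ c₂ := by
    have : k ≤ 1 / 2 ^ c₂ := div_le_div_of_nonneg_right (min_le_right _ _) (by positivity)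
    have : 1 / 2 ^ c₂ ≤ (1 : ℝ) := (div_le_one (by positivity)).mpr hD
    nlinarith [show 0 ≤ k by positivity]
  have hK : (2 : ℝ) ≤ K ^ 2 := by nlinarith [le_max_right (2 * c₂) 4]
  constructor
  · refine mul_norm_sub_le_norm_smul_sub_smul (by positivity) ?_ ?_
    · rw [hαa, hβb, abs_of_nonneg hab, abs_of_nonneg hincr]
      exact le_trans (by gcongr) hincr_low
    · calc (k * α) ^ 2 = k ^ 2 * α ^ 2 := mul_pow k α 2
        _ ≤ 1 / 2 ^ c₂ * α ^ 2 := mul_le_mul_of_nonneg_right hk_sq (sq_nonneg α)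
        _ = α * (α / 2 ^ c₂) := by ring
        _ ≤ α * β := by gcongr; exact (div_le_iff₀' (by positivity)).mpr hαβ
  · refine norm_smul_sub_smul_le_mul_norm_sub (by positivity) ?_ ?_
    · rw [hαa, hβb, abs_of_nonneg hab, abs_of_nonneg hincr]
      exact hincr_up.trans (by gcongr; exact le_max_left _ _)
    · calc α * β ≤ α * (2 * α) := mul_le_mul_of_nonneg_left hβα hα
        _ = 2 * α ^ 2 := by ring
        _ ≤ K ^ 2 * α ^ 2 := mul_le_mul_of_nonneg_right hK (sq_nonneg α)
        _ = (K * α) ^ 2 := (mul_pow K α 2).symm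

theorem norm_radialMap_sub_far (hc₁ : 0 ≤ c₁) (hc₂ : 0 ≤ c₂) (hE : IsElliptic ρ c₁ c₂)
    (hpos : ∀ t > 0, 0 < deriv ρ t) {x y : E} (hx : 0 < ‖x‖) (hyx : 2 * ‖y‖ ≤ ‖x‖) :
    c₁ / (3 * 2 ^ c₂) * (deriv ρ ‖x‖ / ‖x‖) * ‖x - y‖ ≤
        ‖radialMap (deriv ρ) x - radialMap (deriv ρ) y‖ ∧
      ‖radialMap (deriv ρ) x - radialMap (deriv ρ) y‖ ≤ 4 * (deriv ρ ‖x‖ / ‖x‖) * ‖x - y‖ := by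
  set a := ‖x‖
  set d := ‖x - y‖
  have hmono := hE.monotoneOn_deriv hc₁ hpos
  have hhalf : 0 < a / 2 := half_pos hx
  have hAx : ‖radialMap (deriv ρ) x‖ = deriv ρ a :=
    norm_radialMap (norm_pos_iff.mp hx) (hpos a hx).le
  have hAy : ‖radialMap (deriv ρ) y‖ ≤ deriv ρ (a / 2) := by
    rcases eq_or_ne y 0 with rfl | hy
    · simpa [radialMap] using (hpos _ hhalf).le
    have hy' := norm_pos_iff.mpr hy
    rw [norm_radialMap hy (hpos _ hy').le]
    exact hmono hy' hhalf (by linarith)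
  have hd_low : a / 2 ≤ d := by linarith [norm_sub_norm_le x y]
  have hd_up : d ≤ 3 / 2 * a := by linarith [norm_sub_le x y]
  have hα : 0 ≤ deriv ρ a / a := div_nonneg (hpos a hx).le hx.le
  constructor
  · have hincr :=
      (hE.deriv_sub_deriv_bounds (a := a) hc₁ hc₂ hpos hhalf (by linarith) (by linarith)).1
    have hdiff := norm_sub_norm_le (radialMap (deriv ρ) x) (radialMap (deriv ρ) y)
    calc c₁ / (3 * 2 ^ c₂) * (deriv ρ a / a) * d
        ≤ c₁ / (3 * 2 ^ c₂) * (deriv ρ a / a) * (3 / 2 * a) := by gcongr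
      _ = c₁ / 2 ^ c₂ * (deriv ρ a / a) * (a - a / 2) := by field_simp; ring
      _ ≤ _ := by linarith
  · have hAy' : ‖radialMap (deriv ρ) y‖ ≤ deriv ρ a := hAy.trans (hmono hhalf hx (by linarith))
    calc ‖radialMap (deriv ρ) x - radialMap (deriv ρ) y‖
        ≤ 2 * (deriv ρ a / a) * a := by
          rw [mul_assoc, div_mul_cancel₀ _ hx.ne']
          linarith [norm_sub_le (radialMap (deriv ρ) x) (radialMap (deriv ρ) y)]
      _ ≤ 4 * (deriv ρ a / a) * d := by nlinarith

theorem norm_radialMap_sub_bounds_of_norm_le (hc₁ : 0 ≤ c₁) (hc₂ : 0 ≤ c₂)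
    (hE : IsElliptic ρ c₁ c₂) (hpos : ∀ t > 0, 0 < deriv ρ t) {x y : E} (hyx : ‖y‖ ≤ ‖x‖) :
    min c₁ 1 / (3 * 2 ^ c₂) * (deriv ρ ‖x‖ / ‖x‖) * ‖x - y‖ ≤
        ‖radialMap (deriv ρ) x - radialMap (deriv ρ) y‖ ∧
      ‖radialMap (deriv ρ) x - radialMap (deriv ρ) y‖ ≤
        max (2 * c₂) 4 * (deriv ρ ‖x‖ / ‖x‖) * ‖x - y‖ := by
  rcases (norm_nonneg x).eq_or_lt with hx | hx
  · have hx0 : x = 0 := norm_eq_zero.mp hx.symm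
    have hy0 : y = 0 := norm_eq_zero.mp (le_antisymm (hx ▸ hyx) (norm_nonneg y))
    simp [hx0, hy0]
  have hψ : 0 ≤ deriv ρ ‖x‖ / ‖x‖ * ‖x - y‖ :=
    mul_nonneg (div_nonneg (hpos _ hx).le hx.le) (norm_nonneg _)
  have hD : 0 < (2 : ℝ) ^ c₂ := by positivity
  simp only [mul_assoc] at hψ ⊢
  rcases le_or_gt (2 * ‖y‖) ‖x‖ with hfar | hnear
  · obtain ⟨hlow, hup⟩ := hE.norm_radialMap_sub_far hc₁ hc₂ hpos hx hfar
    simp only [mul_assoc] at hlow hup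
    constructor
    · refine le_trans (mul_le_mul_of_nonneg_right ?_ hψ) hlow
      exact div_le_div_of_nonneg_right (min_le_left _ _) (by positivity)
    · exact hup.trans (mul_le_mul_of_nonneg_right (le_max_right _ _) hψ)
  · have hy : 0 < ‖y‖ := by linarith
    obtain ⟨hlow, hup⟩ := hE.norm_radialMap_sub_near hc₁ hc₂ hpos hy hyx hnear.le
    simp only [mul_assoc] at hlow hup
    refine ⟨le_trans (mul_le_mul_of_nonneg_right ?_ hψ) hlow, hup⟩
    exact div_le_div_of_nonneg_left (by positivity) hD (by linarith)

theorem norm_radialMap_sub_bounds (hc₁ : 0 ≤ c₁) (hc₂ : 0 ≤ c₂) (hE : IsElliptic ρ c₁ c₂)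
    (hpos : ∀ t > 0, 0 < deriv ρ t) (x y : E) :
    min c₁ 1 / (3 * 2 ^ c₂) * (deriv ρ (max ‖x‖ ‖y‖) / max ‖x‖ ‖y‖) * ‖x - y‖ ≤
        ‖radialMap (deriv ρ) x - radialMap (deriv ρ) y‖ ∧
      ‖radialMap (deriv ρ) x - radialMap (deriv ρ) y‖ ≤
        max (2 * c₂) 4 * (deriv ρ (max ‖x‖ ‖y‖) / max ‖x‖ ‖y‖) * ‖x - y‖ := by
  rcases le_total ‖y‖ ‖x‖ with hyx | hxy
  · rw [max_eq_left hyx]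
    exact hE.norm_radialMap_sub_bounds_of_norm_le hc₁ hc₂ hpos hyx
  · rw [max_eq_right hxy, norm_sub_rev x, norm_sub_rev (radialMap (deriv ρ) x)]
    exact hE.norm_radialMap_sub_bounds_of_norm_le hc₁ hc₂ hpos hxy

end IsElliptic

end InnerProductSpace

/-- For an elliptic N-function `ρ`, uniformly in
`P, Q ∈ ℝ^{n×n}`: `|A^ρ(P) − A^ρ(Q)| ∼ (ρ_{|P|})'(|P − Q|)`, where
`(ρ_a)'(t) = ρ'(a + t)·t/(a + t)`, with constants depending only on the
characteristics of `ρ`. -/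
theorem statement13 (n : ℕ) (ρ : ℝ → ℝ) (c₁ c₂ : ℝ) (hc₁ : 0 < c₁) (hc₂ : 0 < c₂)
    (hN : IsNFunction ρ) (hE : IsElliptic ρ c₁ c₂) :
    ∃ C₁ > 0, ∃ C₂ > 0, ∀ P Q : EuclideanSpace ℝ (Fin n × Fin n),
      C₁ * (deriv ρ (‖P‖ + ‖P - Q‖) * ‖P - Q‖ / (‖P‖ + ‖P - Q‖)) ≤
        ‖AtensR n ρ P - AtensR n ρ Q‖ ∧
      ‖AtensR n ρ P - AtensR n ρ Q‖ ≤
        C₂ * (deriv ρ (‖P‖ + ‖P - Q‖) * ‖P - Q‖ / (‖P‖ + ‖P - Q‖)) := by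
  have hpos : ∀ t > 0, 0 < deriv ρ t := fun t ht => hE.deriv_pos hN ht
  refine ⟨min c₁ 1 / (3 * 2 ^ c₂) / 3 ^ c₂, by positivity, 3 * max (2 * c₂) 4, by positivity,
    fun P Q => ?_⟩
  rcases eq_or_ne P Q with rfl | hPQ
  · simp
  obtain ⟨hlow, hup⟩ := hE.norm_radialMap_sub_bounds hc₁.le hc₂.le hpos P Q
  rw [show AtensR n ρ = radialMap (deriv ρ) from rfl]
  set M := max ‖P‖ ‖Q‖
  set m := ‖P‖ + ‖P - Q‖
  have hd : 0 < ‖P - Q‖ := norm_pos_iff.mpr (sub_ne_zero.mpr hPQ)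
  have hM : 0 < M := by
    linarith [norm_sub_le P Q, le_max_left ‖P‖ ‖Q‖, le_max_right ‖P‖ ‖Q‖]
  have hMm : M ≤ m :=
    max_le (by linarith) (by linarith [norm_le_norm_add_norm_sub' Q P, norm_sub_rev Q P])
  have hmM : m ≤ 3 * M := by
    linarith [norm_sub_le P Q, le_max_left ‖P‖ ‖Q‖, le_max_right ‖P‖ ‖Q‖]
  have hMψ := hE.deriv_div_le_mul hc₁.le hpos hM hMm hmM
  have hmψ := hE.deriv_div_le_rpow_mul hc₂.le hpos hM hMm hmM
  rw [mul_div_right_comm]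
  constructor
  · calc min c₁ 1 / (3 * 2 ^ c₂) / 3 ^ c₂ * (deriv ρ m / m * ‖P - Q‖)
        ≤ min c₁ 1 / (3 * 2 ^ c₂) / 3 ^ c₂ * (3 ^ c₂ * (deriv ρ M / M) * ‖P - Q‖) := by gcongr
      _ = min c₁ 1 / (3 * 2 ^ c₂) * (deriv ρ M / M) * ‖P - Q‖ := by field_simp
      _ ≤ _ := hlow
  · calc _ ≤ max (2 * c₂) 4 * (deriv ρ M / M) * ‖P - Q‖ := hup
      _ ≤ max (2 * c₂) 4 * (3 * (deriv ρ m / m)) * ‖P - Q‖ := by gcongr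
      _ = 3 * max (2 * c₂) 4 * (deriv ρ m / m * ‖P - Q‖) := by ring
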